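/- arXiv:2412.00585 — 2 statements merged into one kernel-verified Lean document; each statement's English description precedes it below -/
import Mathlib

section
/- Let φ(x, y) = f(x, y) + h₁(x) − h₂(y), where f : ℝⁿ × ℝᵐ → ℝ is convex in x and concave in y, h₁ : ℝⁿ → ℝ ∪ {+∞} and h₂ : ℝᵐ → ℝ ∪ {+∞} are proper lower semicontinuous convex with dom h₁ × dom h₂ ⊆ dom f, and suppose dom h₁ × dom h₂ is bounded with diameter at most D > 0. Let ε̄ > 0, M > 0, λ₁ > 0 and λ_k = λ₁/√k for k ≥ 1. Suppose points (x_k, y_k) ∈ dom h₁ × dom h₂ (k ≥ 0) and (x̃_k, ỹ_k) ∈ dom h₁ × dom h₂ (k ≥ 1) satisfy, for every k ≥ 1 and all (u, v) ∈ dom h₁ × dom h₂, φ(x̃_k, v) − φ(u, ỹ_k) ≤ ε̄/2 + (1/(2λ_k))(‖(x_{k−1}, y_{k−1}) − (u, v)‖² − ‖(x_k, y_k) − (u, v)‖²) + 4λ_k M². Then with x̄_k = (1/k)∑_{i=1}^k x̃_i and ȳ_k = (1/k)∑_{i=1}^k ỹ_i, sup_{v ∈ ℝᵐ} φ(x̄_k,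 v) − inf_{u ∈ ℝⁿ} φ(u, ȳ_k) ≤ ε̄/2 + 8λ₁M²/√k + D²/(2λ₁√k) for every k ≥ 1. -/
lemma aux_sum_inv_sqrt (k : ℕ) :
    ∑ i ∈ Finset.Icc 1 k, (Real.sqrt i)⁻¹ ≤ 2 * Real.sqrt k := by
  induction k with
  | zero => simp
  | succ k ih =>
    rw [Finset.sum_Icc_succ_top (by omega : 1 ≤ k + 1)]
    have hs : Real.sqrt k * Real.sqrt k = k := Real.mul_self_sqrt (by positivity)
    have ht : Real.sqrt ((k : ℕ) + 1 : ℕ) * Real.sqrt ((k : ℕ) + 1 : ℕ) = (k : ℝ) + 1 := by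
      rw [Real.mul_self_sqrt (by positivity)]; push_cast; ring
    have ht0 : 0 < Real.sqrt ((k : ℕ) + 1 : ℕ) := by
      apply Real.sqrt_pos.2; push_cast; positivity
    have hs0 : 0 ≤ Real.sqrt k := Real.sqrt_nonneg _
    have key : (Real.sqrt ((k : ℕ) + 1 : ℕ))⁻¹ ≤ 2 * (Real.sqrt ((k : ℕ) + 1 : ℕ) - Real.sqrt k) := by
      rw [inv_le_iff_one_le_mul₀' ht0]
      nlinarith [sq_nonneg (Real.sqrt ((k : ℕ) + 1 : ℕ) - Real.sqrt k)]
    have hcast : Real.sqrt ((k : ℝ) + 1) = Real.sqrt ((k : ℕ) + 1 : ℕ) := by push_cast; ring_nf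
    push_cast
    push_cast at ih key hcast ht ht0 ⊢
    linarith

lemma aux_telescope (D : ℝ) (A : ℕ → ℝ) (hD : ∀ i, A i ≤ D ^ 2) :
    ∀ k : ℕ, ∑ i ∈ Finset.Icc 1 k, Real.sqrt i * (A (i - 1) - A i)
      + Real.sqrt k * A k ≤ Real.sqrt k * D ^ 2 := by
  intro k
  induction k with
  | zero => simp
  | succ k ih =>
    rw [Finset.sum_Icc_succ_top (by omega : 1 ≤ k + 1)]
    have hsub : (k + 1) - 1 = k := rfl
    rw [hsub]
    have hle : Real.sqrt k ≤ Real.sqrt (k + 1 : ℕ) := by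
      apply Real.sqrt_le_sqrt; push_cast; linarith
    nlinarith [hD k, hle, Real.sqrt_nonneg (k : ℝ)]


set_option maxHeartbeats 1000000 in
/-- outer convergence rate of the proximal bundle method for saddle-point
problems: `φ̄(x̄_k) - ψ(ȳ_k) ≤ ε̄/2 + 8λ₁M²/√k + D²/(2λ₁√k)`, given the per-iteration
estimate produced by solving each proximal subproblem to accuracy `ε̄/4` with
stepsizes `λ_k = λ₁/√k`. -/
theorem stmt18 {n m : ℕ}
    (f : EuclideanSpace ℝ (Fin n) → EuclideanSpace ℝ (Fin m) → ℝ)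
    (h₁ : EuclideanSpace ℝ (Fin n) → ℝ) (h₂ : EuclideanSpace ℝ (Fin m) → ℝ)
    (dom₁ : Set (EuclideanSpace ℝ (Fin n))) (dom₂ : Set (EuclideanSpace ℝ (Fin m)))
    (hconv : ∀ y, ConvexOn ℝ Set.univ (fun x => f x y))
    (hconc : ∀ x, ConcaveOn ℝ Set.univ (fun y => f x y))
    (hh₁conv : ConvexOn ℝ dom₁ h₁) (hh₁lsc : LowerSemicontinuousOn h₁ dom₁)
    (hh₂conv : ConvexOn ℝ dom₂ h₂) (hh₂lsc : LowerSemicontinuousOn h₂ dom₂)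
    (D M eps lam₁ : ℝ) (hD : 0 < D) (hM : 0 < M) (heps : 0 < eps) (hlam₁ : 0 < lam₁)
    -- dom h₁ × dom h₂ is bounded with diameter at most D (in the Euclidean product norm)
    (hdiam : ∀ x ∈ dom₁, ∀ x' ∈ dom₁, ∀ y ∈ dom₂, ∀ y' ∈ dom₂,
      ‖x - x'‖ ^ 2 + ‖y - y'‖ ^ 2 ≤ D ^ 2)
    (x xt : ℕ → EuclideanSpace ℝ (Fin n)) (y yt : ℕ → EuclideanSpace ℝ (Fin m))
    (hxmem : ∀ k, x k ∈ dom₁) (hymem : ∀ k, y k ∈ dom₂)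
    (hxtmem : ∀ k, 1 ≤ k → xt k ∈ dom₁) (hytmem : ∀ k, 1 ≤ k → yt k ∈ dom₂)
    -- per-iteration estimate with λ_k = λ₁/√k
    (hstep : ∀ k : ℕ, 1 ≤ k → ∀ u ∈ dom₁, ∀ v ∈ dom₂,
      (f (xt k) v + h₁ (xt k) - h₂ v) - (f u (yt k) + h₁ u - h₂ (yt k))
        ≤ eps / 2
          + (1 / (2 * (lam₁ / Real.sqrt k)))
            * ((‖x (k - 1) - u‖ ^ 2 + ‖y (k - 1) - v‖ ^ 2)
              - (‖x k - u‖ ^ 2 + ‖y k - v‖ ^ 2))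
          + 4 * (lam₁ / Real.sqrt k) * M ^ 2) :
    ∀ k : ℕ, 1 ≤ k →
      (⨆ v ∈ dom₂,
          ((f ((k : ℝ)⁻¹ • ∑ i ∈ Finset.Icc 1 k, xt i) v
            + h₁ ((k : ℝ)⁻¹ • ∑ i ∈ Finset.Icc 1 k, xt i) - h₂ v : ℝ) : EReal))
        - (⨅ u ∈ dom₁,
            ((f u ((k : ℝ)⁻¹ • ∑ i ∈ Finset.Icc 1 k, yt i)
              + h₁ u - h₂ ((k : ℝ)⁻¹ • ∑ i ∈ Finset.Icc 1 k, yt i) : ℝ) : EReal))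
      ≤ ((eps / 2 + 8 * lam₁ * M ^ 2 / Real.sqrt k
          + D ^ 2 / (2 * lam₁ * Real.sqrt k) : ℝ) : EReal) := by
  intro k hk
  have hk0 : (0 : ℝ) < (k : ℝ) := by exact_mod_cast hk
  have hsq : Real.sqrt k * Real.sqrt k = (k : ℝ) := Real.mul_self_sqrt hk0.le
  have hsk : 0 < Real.sqrt k := Real.sqrt_pos.2 hk0
  set xb : EuclideanSpace ℝ (Fin n) := (k : ℝ)⁻¹ • ∑ i ∈ Finset.Icc 1 k, xt i with hxb
  set yb : EuclideanSpace ℝ (Fin m) := (k : ℝ)⁻¹ • ∑ i ∈ Finset.Icc 1 k, yt i with hyb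
  set B : ℝ := eps / 2 + 8 * lam₁ * M ^ 2 / Real.sqrt k + D ^ 2 / (2 * lam₁ * Real.sqrt k)
    with hB
  have hcard : (Finset.Icc 1 k).card = k := by rw [Nat.card_Icc]; omega
  have hwsum : ∑ _i ∈ Finset.Icc 1 k, (k : ℝ)⁻¹ = 1 := by
    rw [Finset.sum_const, hcard, nsmul_eq_mul]
    field_simp
  have hw0 : ∀ i ∈ Finset.Icc 1 k, (0 : ℝ) ≤ (k : ℝ)⁻¹ := fun i _ => by positivity
  have hxbs : xb = ∑ i ∈ Finset.Icc 1 k, (k : ℝ)⁻¹ • xt i := by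
    rw [hxb, Finset.smul_sum]
  have hybs : yb = ∑ i ∈ Finset.Icc 1 k, (k : ℝ)⁻¹ • yt i := by
    rw [hyb, Finset.smul_sum]
  have hmem1 : ∀ i ∈ Finset.Icc 1 k, xt i ∈ dom₁ := fun i hi =>
    hxtmem i (Finset.mem_Icc.1 hi).1
  have hmem2 : ∀ i ∈ Finset.Icc 1 k, yt i ∈ dom₂ := fun i hi =>
    hytmem i (Finset.mem_Icc.1 hi).1
  have hxbmem : xb ∈ dom₁ := by
    rw [hxbs]
    exact hh₁conv.1.sum_mem hw0 hwsum hmem1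
  have hybmem : yb ∈ dom₂ := by
    rw [hybs]
    exact hh₂conv.1.sum_mem hw0 hwsum hmem2
  -- key real inequality
  have hkey : ∀ u ∈ dom₁, ∀ v ∈ dom₂,
      f xb v + h₁ xb - h₂ v ≤ B + (f u yb + h₁ u - h₂ yb) := by
    intro u hu v hv
    set A : ℕ → ℝ := fun i => ‖x i - u‖ ^ 2 + ‖y i - v‖ ^ 2 with hA
    have hAD : ∀ i, A i ≤ D ^ 2 := fun i => hdiam _ (hxmem i) u hu _ (hymem i) v hv
    -- per-term bound
    have hterm : ∀ i ∈ Finset.Icc 1 k,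
        (f (xt i) v + h₁ (xt i) - h₂ v) - (f u (yt i) + h₁ u - h₂ (yt i))
          ≤ eps / 2 + (1 / (2 * lam₁)) * (Real.sqrt i * (A (i - 1) - A i))
            + (4 * lam₁ * M ^ 2) * (Real.sqrt i)⁻¹ := by
      intro i hi
      have hi1 : 1 ≤ i := (Finset.mem_Icc.1 hi).1
      have hsi : 0 < Real.sqrt i := Real.sqrt_pos.2 (by exact_mod_cast hi1)
      have := hstep i hi1 u hu v hv
      have e1 : 1 / (2 * (lam₁ / Real.sqrt i)) = (1 / (2 * lam₁)) * Real.sqrt i := by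
        field_simp
      have e2 : 4 * (lam₁ / Real.sqrt i) * M ^ 2 = (4 * lam₁ * M ^ 2) * (Real.sqrt i)⁻¹ := by
        rw [div_eq_mul_inv]; ring
      rw [e1, e2] at this
      calc (f (xt i) v + h₁ (xt i) - h₂ v) - (f u (yt i) + h₁ u - h₂ (yt i))
          ≤ eps / 2 + (1 / (2 * lam₁)) * Real.sqrt i * (A (i - 1) - A i)
            + (4 * lam₁ * M ^ 2) * (Real.sqrt i)⁻¹ := this
        _ = eps / 2 + (1 / (2 * lam₁)) * (Real.sqrt i * (A (i - 1) - A i))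
            + (4 * lam₁ * M ^ 2) * (Real.sqrt i)⁻¹ := by ring
    -- sum bound
    have hsum : ∑ i ∈ Finset.Icc 1 k,
        ((f (xt i) v + h₁ (xt i) - h₂ v) - (f u (yt i) + h₁ u - h₂ (yt i)))
        ≤ (k : ℝ) * (eps / 2) + (1 / (2 * lam₁)) * (Real.sqrt k * D ^ 2)
          + (4 * lam₁ * M ^ 2) * (2 * Real.sqrt k) := by
      calc ∑ i ∈ Finset.Icc 1 k,
          ((f (xt i) v + h₁ (xt i) - h₂ v) - (f u (yt i) + h₁ u - h₂ (yt i)))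
          ≤ ∑ i ∈ Finset.Icc 1 k,
            (eps / 2 + (1 / (2 * lam₁)) * (Real.sqrt i * (A (i - 1) - A i))
              + (4 * lam₁ * M ^ 2) * (Real.sqrt i)⁻¹) := Finset.sum_le_sum hterm
        _ = (k : ℝ) * (eps / 2)
            + (1 / (2 * lam₁)) * (∑ i ∈ Finset.Icc 1 k, Real.sqrt i * (A (i - 1) - A i))
            + (4 * lam₁ * M ^ 2) * (∑ i ∈ Finset.Icc 1 k, (Real.sqrt i)⁻¹) := by
          rw [Finset.sum_add_distrib, Finset.sum_add_distrib, Finset.sum_const, hcard,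
            nsmul_eq_mul, ← Finset.mul_sum, ← Finset.mul_sum]
        _ ≤ (k : ℝ) * (eps / 2) + (1 / (2 * lam₁)) * (Real.sqrt k * D ^ 2)
            + (4 * lam₁ * M ^ 2) * (2 * Real.sqrt k) := by
          have ht := aux_telescope D A hAD k
          have hA0 : 0 ≤ A k := by positivity
          have h1 : ∑ i ∈ Finset.Icc 1 k, Real.sqrt i * (A (i - 1) - A i)
              ≤ Real.sqrt k * D ^ 2 := by nlinarith [hsk]
          have h2 := aux_sum_inv_sqrt k
          have c1 : (0:ℝ) < 1 / (2 * lam₁) := by positivity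
          have c2 : (0:ℝ) < 4 * lam₁ * M ^ 2 := by positivity
          nlinarith [mul_le_mul_of_nonneg_left h1 c1.le, mul_le_mul_of_nonneg_left h2 c2.le]
    -- Jensen
    have J1 : f xb v ≤ ∑ i ∈ Finset.Icc 1 k, (k : ℝ)⁻¹ * f (xt i) v := by
      have := (hconv v).map_sum_le hw0 hwsum (fun i _ => Set.mem_univ (xt i))
      simpa [smul_eq_mul, ← hxbs] using this
    have J2 : h₁ xb ≤ ∑ i ∈ Finset.Icc 1 k, (k : ℝ)⁻¹ * h₁ (xt i) := by
      have := hh₁conv.map_sum_le hw0 hwsum hmem1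
      simpa [smul_eq_mul, ← hxbs] using this
    have J3 : ∑ i ∈ Finset.Icc 1 k, (k : ℝ)⁻¹ * f u (yt i) ≤ f u yb := by
      have := (hconc u).le_map_sum hw0 hwsum (fun i _ => Set.mem_univ (yt i))
      simpa [smul_eq_mul, ← hybs] using this
    have J4 : h₂ yb ≤ ∑ i ∈ Finset.Icc 1 k, (k : ℝ)⁻¹ * h₂ (yt i) := by
      have := hh₂conv.map_sum_le hw0 hwsum hmem2
      simpa [smul_eq_mul, ← hybs] using this
    -- splitting the sum
    have hsplit : ∑ i ∈ Finset.Icc 1 k,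
        ((f (xt i) v + h₁ (xt i) - h₂ v) - (f u (yt i) + h₁ u - h₂ (yt i)))
        = (∑ i ∈ Finset.Icc 1 k, f (xt i) v) + (∑ i ∈ Finset.Icc 1 k, h₁ (xt i))
          - (k : ℝ) * h₂ v - (∑ i ∈ Finset.Icc 1 k, f u (yt i)) - (k : ℝ) * h₁ u
          + (∑ i ∈ Finset.Icc 1 k, h₂ (yt i)) := by
      rw [Finset.sum_sub_distrib, Finset.sum_sub_distrib, Finset.sum_sub_distrib,
        Finset.sum_add_distrib, Finset.sum_add_distrib, Finset.sum_const, Finset.sum_const,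
        hcard, nsmul_eq_mul]
      ring
    have hmean : ∀ S : ℝ, (k:ℝ)⁻¹ * ∑ i ∈ Finset.Icc 1 k, S = S := by
      intro S
      rw [Finset.sum_const, hcard, nsmul_eq_mul]
      field_simp
    have havg : f xb v + h₁ xb - h₂ v - (f u yb + h₁ u - h₂ yb)
        ≤ (k : ℝ)⁻¹ * ∑ i ∈ Finset.Icc 1 k,
          ((f (xt i) v + h₁ (xt i) - h₂ v) - (f u (yt i) + h₁ u - h₂ (yt i))) := by
      rw [hsplit]
      have e : (k : ℝ)⁻¹ * ((∑ i ∈ Finset.Icc 1 k, f (xt i) v)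
            + (∑ i ∈ Finset.Icc 1 k, h₁ (xt i))
            - (k : ℝ) * h₂ v - (∑ i ∈ Finset.Icc 1 k, f u (yt i)) - (k : ℝ) * h₁ u
            + (∑ i ∈ Finset.Icc 1 k, h₂ (yt i)))
          = (∑ i ∈ Finset.Icc 1 k, (k : ℝ)⁻¹ * f (xt i) v)
            + (∑ i ∈ Finset.Icc 1 k, (k : ℝ)⁻¹ * h₁ (xt i)) - h₂ v
            - (∑ i ∈ Finset.Icc 1 k, (k : ℝ)⁻¹ * f u (yt i)) - h₁ u
            + (∑ i ∈ Finset.Icc 1 k, (k : ℝ)⁻¹ * h₂ (yt i)) := by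
        rw [← Finset.mul_sum, ← Finset.mul_sum, ← Finset.mul_sum, ← Finset.mul_sum]
        field_simp
      rw [e]
      linarith [J1, J2, J3, J4]
    have hfin : (k : ℝ)⁻¹ * ((k : ℝ) * (eps / 2) + (1 / (2 * lam₁)) * (Real.sqrt k * D ^ 2)
        + (4 * lam₁ * M ^ 2) * (2 * Real.sqrt k)) = B := by
      obtain ⟨s, hs⟩ : ∃ s, s = Real.sqrt (k : ℝ) := ⟨_, rfl⟩
      have hs0 : s ≠ 0 := by rw [hs]; exact hsk.ne'
      have hsq' : s * s = (k : ℝ) := by rw [hs]; exact hsq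
      rw [hB, ← hs, ← hsq']
      field_simp
      ring
    have := mul_le_mul_of_nonneg_left hsum (by positivity : (0:ℝ) ≤ (k:ℝ)⁻¹)
    rw [hfin] at this
    calc f xb v + h₁ xb - h₂ v
        ≤ (f u yb + h₁ u - h₂ yb) + ((k:ℝ)⁻¹ * ∑ i ∈ Finset.Icc 1 k,
            ((f (xt i) v + h₁ (xt i) - h₂ v) - (f u (yt i) + h₁ u - h₂ (yt i)))) := by
          linarith [havg]
      _ ≤ (f u yb + h₁ u - h₂ yb) + B := by linarith [this]
      _ = B + (f u yb + h₁ u - h₂ yb) := by ring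
  -- EReal part
  set S : EReal := ⨆ v ∈ dom₂, ((f xb v + h₁ xb - h₂ v : ℝ) : EReal) with hS
  set I : EReal := ⨅ u ∈ dom₁, ((f u yb + h₁ u - h₂ yb : ℝ) : EReal) with hI
  have hIub : I ≤ ((f (x 0) yb + h₁ (x 0) - h₂ yb : ℝ) : EReal) := by
    exact iInf₂_le (x 0) (hxmem 0)
  have hIlb : ((f xb (y 0) + h₁ xb - h₂ (y 0) - B : ℝ) : EReal) ≤ I := by
    apply le_iInf₂
    intro u hu
    exact_mod_cast (by linarith [hkey u hu (y 0) (hymem 0)] :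
      f xb (y 0) + h₁ xb - h₂ (y 0) - B ≤ f u yb + h₁ u - h₂ yb)
  have hItop : I ≠ ⊤ := ne_top_of_le_ne_top (EReal.coe_ne_top _) hIub
  have hIbot : I ≠ ⊥ := ((EReal.bot_lt_coe _).trans_le hIlb).ne'
  set ι : ℝ := I.toReal with hι
  have hIcoe : (ι : EReal) = I := EReal.coe_toReal hItop hIbot
  have hup : ∀ v ∈ dom₂, f xb v + h₁ xb - h₂ v ≤ B + ι := by
    intro v hv
    by_contra hcon
    push_neg at hcon
    have hlt : I < ((f xb v + h₁ xb - h₂ v - B : ℝ) : EReal) := by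
      rw [← hIcoe]
      exact_mod_cast (by linarith : ι < f xb v + h₁ xb - h₂ v - B)
    rw [hI] at hlt
    obtain ⟨u, hu⟩ := iInf_lt_iff.1 hlt
    obtain ⟨humem, hu2⟩ := iInf_lt_iff.1 hu
    have : f u yb + h₁ u - h₂ yb < f xb v + h₁ xb - h₂ v - B := by exact_mod_cast hu2
    linarith [hkey u humem v hv]
  have hSle : S ≤ ((B + ι : ℝ) : EReal) := by
    apply iSup₂_le
    intro v hv
    exact_mod_cast hup v hv
  calc S - I = S - (ι : EReal) := by rw [hIcoe]
    _ ≤ ((B + ι : ℝ) : EReal) - (ι : EReal) := EReal.sub_le_sub hSle le_rfl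
    _ = (B : EReal) := by
        rw [← EReal.coe_sub]
        norm_num
end

section
/- Let z ∈ ℝⁿ, γ ≥ 0, and let σ be a permutation of {1, …, n} such that z_{σ(1)} ≤ z_{σ(2)} ≤ … ≤ z_{σ(n)}. For j = 1, …, n define S_j = (γ + ∑_{i=1}^j z_{σ(i)}) / j, and let j* be the smallest index j < n with S_j ≤ S_{j+1}, or j* = n if no such index exists. Define x̂ ∈ ℝⁿ by x̂_{σ(i)} = 1/j* for i ≤ j* and x̂_{σ(i)} = 0 for i > j*. Then x̂ minimizes f_z(x) = ⟨z, x⟩ + γ‖x‖_∞ over the unit simplex Δ_n = {x ∈ ℝⁿ : x_i ≥ 0 for all i, ∑_{i=1}^n x_i = 1}, and the minimum value equals S_{j*}. -/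
/-- The candidate solution: `x̂_{σ(i)} = 1/j*` for the `j*` smallest coordinates
(positions `i` with `(σ⁻¹ i) < j*` in the sorted order) and `0` elsewhere. -/
noncomputable def xhat (n : ℕ) (σ : Equiv.Perm (Fin n)) (jstar : ℕ) : Fin n → ℝ :=
  fun i => if ((σ.symm i : ℕ) < jstar) then ((jstar : ℝ))⁻¹ else 0

/-- The objective `f_z(x) = ⟨z, x⟩ + γ ‖x‖_∞`; here `‖·‖` on `Fin n → ℝ` is the sup norm. -/
noncomputable def fz (n : ℕ) (z : Fin n → ℝ) (γ : ℝ) (w : Fin n → ℝ) : ℝ :=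
  (∑ i, z i * w i) + γ * ‖w‖

/-- exact minimization of `f_z(x) = ⟨z, x⟩ + γ‖x‖_∞` over the unit simplex:
with `S_j = (γ + ∑_{i=1}^j z_{σ(i)})/j` and `j*` the first index with `S_{j*} ≤ S_{j*+1}`
(or `n` if none), the vector `x̂` is a minimizer and the minimum value is `S_{j*}`. -/
theorem stmt19 (n : ℕ) (hn : 0 < n) (z : Fin n → ℝ) (γ : ℝ) (hγ : 0 ≤ γ)
    (σ : Equiv.Perm (Fin n))
    -- σ sorts z in non-decreasing order
    (hσ : ∀ i j : Fin n, i ≤ j → z (σ i) ≤ z (σ j))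
    (S : ℕ → ℝ)
    (hS : ∀ j : ℕ, S j
      = (γ + ∑ i ∈ Finset.univ.filter (fun i : Fin n => (i : ℕ) < j), z (σ i)) / j)
    (jstar : ℕ) (hj1 : 1 ≤ jstar) (hjn : jstar ≤ n)
    -- j* is the smallest index j < n with S_j ≤ S_{j+1}, or n if no such index exists
    (hjchar1 : jstar < n → S jstar ≤ S (jstar + 1))
    (hjchar2 : ∀ j : ℕ, 1 ≤ j → j < jstar → S (j + 1) < S j) :
    (∀ i, 0 ≤ xhat n σ jstar i) ∧
    (∑ i, xhat n σ jstar i) = 1 ∧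
    (∀ w : Fin n → ℝ, (∀ i, 0 ≤ w i) → (∑ i, w i) = 1 →
      fz n z γ (xhat n σ jstar) ≤ fz n z γ w) ∧
    fz n z γ (xhat n σ jstar) = S jstar := by
  have hj0 : (0:ℝ) < (jstar : ℝ) := by exact_mod_cast hj1
  have hjne : (jstar:ℝ) ≠ 0 := ne_of_gt hj0
  -- the sorted values as a function on ℕ
  set a : ℕ → ℝ := fun k => if h : k < n then z (σ ⟨k, h⟩) else 0 with ha_def
  have ha : ∀ (k : ℕ) (h : k < n), a k = z (σ ⟨k, h⟩) := fun k h => dif_pos h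
  have ha_mono : ∀ k l : ℕ, k ≤ l → l < n → a k ≤ a l := by
    intro k l hkl hl
    rw [ha k (lt_of_le_of_lt hkl hl), ha l hl]
    exact hσ ⟨k, _⟩ ⟨l, _⟩ hkl
  -- a generic reindexing lemma: sums over Fin n composed with σ become range sums
  have hreindex : ∀ (f : Fin n → ℝ) (g : ℕ → ℝ),
      (∀ (k : ℕ) (h : k < n), f (σ ⟨k, h⟩) = g k) →
      (∑ i, f i) = ∑ k ∈ Finset.range n, g k := by
    intro f g hfg
    rw [← Equiv.sum_comp σ f]
    rw [show (∑ i, f (σ i)) = ∑ i : Fin n, g (i : ℕ) from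
      Finset.sum_congr rfl (fun i _ => by rw [← hfg i i.isLt])]
    exact Fin.sum_univ_eq_sum_range _ n
  have hsum : ∀ j : ℕ, j ≤ n →
      (∑ i ∈ Finset.univ.filter (fun i : Fin n => (i : ℕ) < j), z (σ i))
        = ∑ k ∈ Finset.range j, a k := by
    intro j hj
    rw [Finset.sum_filter]
    have e : ∀ i : Fin n, (if (i : ℕ) < j then z (σ i) else 0)
        = (fun k => if k < j then a k else 0) (i : ℕ) := by
      intro i
      by_cases hij : (i : ℕ) < j
      · simp only [hij, if_true]
        rw [ha _ i.isLt, Fin.eta]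
      · simp [hij]
    have h1 : (∑ i : Fin n, if (i : ℕ) < j then z (σ i) else 0)
        = ∑ k ∈ Finset.range n, (if k < j then a k else 0) := by
      rw [← Fin.sum_univ_eq_sum_range (fun k => if k < j then a k else 0) n]
      exact Finset.sum_congr rfl (fun i _ => e i)
    rw [h1]
    rw [← Finset.sum_subset (Finset.range_subset_range.2 hj)
      (fun x _ hx => if_neg (by simpa using hx))]
    exact Finset.sum_congr rfl (fun k hk => if_pos (Finset.mem_range.1 hk))
  have hS' : ∀ j : ℕ, 1 ≤ j → j ≤ n →
      (j : ℝ) * S j = γ + ∑ k ∈ Finset.range j, a k := by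
    intro j h1 h2
    rw [hS j, hsum j h2]
    field_simp
  have hrec : ∀ j : ℕ, 1 ≤ j → j + 1 ≤ n →
      ((j : ℝ) + 1) * S (j + 1) = (j : ℝ) * S j + a j := by
    intro j h1 h2
    have e1 := hS' (j+1) (le_trans h1 (Nat.le_succ j)) h2
    have e2 := hS' j h1 (le_trans (Nat.le_succ j) h2)
    rw [Finset.sum_range_succ] at e1
    push_cast at e1
    linarith
  -- S is nondecreasing after jstar
  have mono_after : ∀ k : ℕ, jstar ≤ k → k + 1 ≤ n →
      S jstar ≤ S k ∧ S k ≤ S (k + 1) := by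
    intro k hk
    induction k, hk using Nat.le_induction with
    | base => exact fun h => ⟨le_refl _, hjchar1 h⟩
    | succ k hk ih =>
      intro h2
      have ih' := ih (by omega)
      have h1k : (1:ℕ) ≤ k := le_trans hj1 hk
      have hak : a k ≥ S (k + 1) := by
        have := hrec k h1k (by omega)
        have hk0 : (0:ℝ) ≤ (k:ℝ) := Nat.cast_nonneg k
        nlinarith [ih'.2]
      have hak1 : a (k + 1) ≥ S (k + 1) :=
        le_trans hak (ha_mono k (k+1) (Nat.le_succ k) (by omega))
      have hr := hrec (k+1) (by omega) h2
      push_cast at hr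
      constructor
      · exact le_trans ih'.1 ih'.2
      · nlinarith [Nat.cast_nonneg (α := ℝ) (k+1)]
  -- a k ≥ S jstar for k ≥ jstar
  have hhigh : ∀ k : ℕ, jstar ≤ k → k < n → S jstar ≤ a k := by
    intro k hk hkn
    have hm := mono_after k hk hkn
    have hr := hrec k (le_trans hj1 hk) hkn
    nlinarith [Nat.cast_nonneg (α := ℝ) k, hm.1, hm.2]
  -- a k ≤ S jstar for k < jstar
  have hlow : ∀ k : ℕ, k < jstar → a k ≤ S jstar := by
    intro k hk
    have hkey : a (jstar - 1) ≤ S jstar := by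
      rcases Nat.lt_or_ge 1 jstar with h | h
      · -- jstar ≥ 2
        obtain ⟨m, rfl⟩ : ∃ m, jstar = m + 1 := ⟨jstar - 1, by omega⟩
        have h1m : (1:ℕ) ≤ m := by omega
        have hr := hrec m h1m (by omega)
        have hdec := hjchar2 m h1m (by omega)
        simp only [Nat.add_sub_cancel]
        have hm0 : (0:ℝ) < (m:ℝ) := by exact_mod_cast h1m
        nlinarith
      · -- jstar = 1
        have hj1' : jstar = 1 := le_antisymm h hj1
        subst hj1'
        have := hS' 1 le_rfl hjn
        rw [Finset.sum_range_one] at this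
        simp only [Nat.cast_one, one_mul] at this
        simpa [this] using hγ
    exact le_trans (ha_mono k (jstar - 1) (by omega) (by omega)) hkey
  -- sum over range jstar
  have hSsum : γ + ∑ k ∈ Finset.range jstar, a k = (jstar : ℝ) * S jstar :=
    (hS' jstar hj1 hjn).symm
  -- facts about xhat
  have hx_nonneg : ∀ i, 0 ≤ xhat n σ jstar i := by
    intro i
    unfold xhat
    split
    · positivity
    · exact le_refl 0
  have hx_reindex : ∀ (k : ℕ) (h : k < n),
      xhat n σ jstar (σ ⟨k, h⟩) = if k < jstar then ((jstar:ℝ))⁻¹ else 0 := by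
    intro k h
    unfold xhat
    simp
  have hx_sum : (∑ i, xhat n σ jstar i) = 1 := by
    rw [hreindex (xhat n σ jstar) (fun k => if k < jstar then ((jstar:ℝ))⁻¹ else 0)
      hx_reindex]
    rw [← Finset.sum_subset (Finset.range_subset_range.2 hjn)
      (fun x _ hx => if_neg (by simpa using hx))]
    rw [Finset.sum_congr rfl (fun k hk => if_pos (Finset.mem_range.1 hk)),
      Finset.sum_const, Finset.card_range, nsmul_eq_mul]
    field_simp
  have hx_inner : (∑ i, z i * xhat n σ jstar i)
      = ((jstar:ℝ))⁻¹ * ∑ k ∈ Finset.range jstar, a k := by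
    rw [hreindex (fun i => z i * xhat n σ jstar i)
      (fun k => a k * (if k < jstar then ((jstar:ℝ))⁻¹ else 0))
      (fun k h => by
        show z (σ ⟨k, h⟩) * xhat n σ jstar (σ ⟨k, h⟩) = _
        simp only [hx_reindex k h, ha k h])]
    rw [← Finset.sum_subset (Finset.range_subset_range.2 hjn)
      (fun x _ hx => by
        rw [if_neg (by simpa using hx), mul_zero])]
    rw [Finset.sum_congr rfl (fun k hk => by rw [if_pos (Finset.mem_range.1 hk)]),
      Finset.mul_sum]
    exact Finset.sum_congr rfl (fun k _ => mul_comm _ _)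
  have hx_norm : ‖xhat n σ jstar‖ = ((jstar:ℝ))⁻¹ := by
    apply le_antisymm
    · apply (pi_norm_le_iff_of_nonneg (by positivity)).2
      intro i
      rw [Real.norm_eq_abs]
      unfold xhat
      split
      · rw [abs_of_nonneg (by positivity)]
      · simp
        try positivity
    · have h0n : (0:ℕ) < n := hn
      have := norm_le_pi_norm (xhat n σ jstar) (σ ⟨0, h0n⟩)
      rw [show xhat n σ jstar (σ ⟨0, h0n⟩) = ((jstar:ℝ))⁻¹ from by
        unfold xhat
        rw [Equiv.symm_apply_apply]
        exact if_pos hj1] at this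
      calc ((jstar:ℝ))⁻¹ ≤ ‖((jstar:ℝ))⁻¹‖ := le_abs_self _
        _ ≤ ‖xhat n σ jstar‖ := this
  have hx_val : fz n z γ (xhat n σ jstar) = S jstar := by
    unfold fz
    rw [hx_inner, hx_norm, hS jstar, hsum jstar hjn]
    field_simp
    ring
  refine ⟨hx_nonneg, hx_sum, ?_, hx_val⟩
  intro w hw hwsum
  rw [hx_val]
  -- main inequality: S jstar ≤ fz w
  set t : ℝ := ‖w‖ with ht_def
  have ht0 : 0 ≤ t := norm_nonneg w
  set u : ℕ → ℝ := fun k => if h : k < n then w (σ ⟨k, h⟩) else 0 with hu_def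
  have hu : ∀ (k : ℕ) (h : k < n), u k = w (σ ⟨k, h⟩) := fun k h => dif_pos h
  have hu_nonneg : ∀ k, k < n → 0 ≤ u k := fun k h => (hu k h) ▸ hw _
  have hu_le : ∀ k, k < n → u k ≤ t := by
    intro k h
    rw [hu k h]
    calc w (σ ⟨k, h⟩) ≤ |w (σ ⟨k, h⟩)| := le_abs_self _
      _ = ‖w (σ ⟨k, h⟩)‖ := rfl
      _ ≤ ‖w‖ := norm_le_pi_norm w _
  have hu_sum : ∑ k ∈ Finset.range n, u k = 1 := by
    rw [← hreindex w u (fun k h => (hu k h).symm)]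
    exact hwsum
  have hinner : (∑ i, z i * w i) = ∑ k ∈ Finset.range n, a k * u k :=
    hreindex _ _ (fun k h => by rw [ha k h, hu k h])
  unfold fz
  rw [hinner]
  -- split the range sum
  have hsplit : ∑ k ∈ Finset.range n, (a k - S jstar) * u k
      = (∑ k ∈ Finset.Ico 0 jstar, (a k - S jstar) * u k)
        + ∑ k ∈ Finset.Ico jstar n, (a k - S jstar) * u k := by
    rw [Finset.sum_Ico_consecutive _ (Nat.zero_le jstar) hjn, Finset.range_eq_Ico]
  have hpart1 : (∑ k ∈ Finset.Ico 0 jstar, (a k - S jstar) * t)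
      ≤ ∑ k ∈ Finset.Ico 0 jstar, (a k - S jstar) * u k := by
    apply Finset.sum_le_sum
    intro k hk
    rw [Finset.mem_Ico] at hk
    have h1 : a k - S jstar ≤ 0 := sub_nonpos.2 (hlow k hk.2)
    exact mul_le_mul_of_nonpos_left (hu_le k (by omega)) h1
  have hpart2 : (0:ℝ) ≤ ∑ k ∈ Finset.Ico jstar n, (a k - S jstar) * u k := by
    apply Finset.sum_nonneg
    intro k hk
    rw [Finset.mem_Ico] at hk
    exact mul_nonneg (sub_nonneg.2 (hhigh k hk.1 hk.2)) (hu_nonneg k hk.2)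
  have hpart1' : ∑ k ∈ Finset.Ico 0 jstar, (a k - S jstar) * t
      = t * ((∑ k ∈ Finset.range jstar, a k) - (jstar:ℝ) * S jstar) := by
    rw [← Finset.range_eq_Ico, ← Finset.sum_mul, Finset.sum_sub_distrib,
      Finset.sum_const, Finset.card_range, nsmul_eq_mul]
    ring
  have hzero : ∑ k ∈ Finset.Ico 0 jstar, (a k - S jstar) * t = -(t * γ) := by
    rw [hpart1']
    have : (∑ k ∈ Finset.range jstar, a k) - (jstar:ℝ) * S jstar = -γ := by
      linarith [hSsum]
    rw [this]; ring
  have hmain : ∑ k ∈ Finset.range n, a k * u k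
      = S jstar + ∑ k ∈ Finset.range n, (a k - S jstar) * u k := by
    rw [Finset.sum_congr rfl (fun k _ => by ring :
      ∀ k ∈ Finset.range n, (a k - S jstar) * u k = a k * u k - S jstar * u k)]
    rw [Finset.sum_sub_distrib, ← Finset.mul_sum, hu_sum]
    ring
  rw [hmain, hsplit]
  nlinarith [hpart1, hpart2, hzero]
end
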